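/- arXiv:2601.09015 — 2 statements merged into one kernel-verified Lean document; each statement's English description precedes it below -/
import Mathlib

section
/- Let Y be a sublattice of an Archimedean vector lattice X and (x_n) a sequence in Y with x_n → 0 relatively uniformly in X. If (x_n) is relatively uniformly Cauchy in Y (with regulator in Y), then x_n → 0 relatively uniformly in Y. -/
open Filter Set

section Defs

variable (X : Type*) [Lattice X] [AddCommGroup X] [Module ℝ X]

/-- Archimedean property for a vector lattice. -/
def VLArchimedean : Prop := ∀ x y : X, (∀ n : ℕ, n • x ≤ y) → x ≤ 0

variable {X}

/-- `Y` is a sublattice: a linear subspace closed under `⊔`. -/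
def IsVLSublattice (Y : Set X) : Prop :=
  (0 : X) ∈ Y ∧ (∀ a ∈ Y, ∀ b ∈ Y, a + b ∈ Y) ∧
    (∀ (c : ℝ), ∀ a ∈ Y, c • a ∈ Y) ∧ (∀ a ∈ Y, ∀ b ∈ Y, a ⊔ b ∈ Y)

/-- `Y` is majorizing in `X`. -/
def Majorizing (Y : Set X) : Prop := ∀ x : X, 0 ≤ x → ∃ y ∈ Y, x ≤ y

/-- Relative uniform convergence of a sequence with regulator `e`. -/
def RUTendsto (x : ℕ → X) (l e : X) : Prop :=
  0 ≤ e ∧ ∀ ε : ℝ, 0 < ε → ∃ N, ∀ n ≥ N, |x n - l| ≤ ε • e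

/-- Relative uniform Cauchy sequence with regulator `e`. -/
def RUCauchy (x : ℕ → X) (e : X) : Prop :=
  0 ≤ e ∧ ∀ ε : ℝ, 0 < ε → ∃ N, ∀ n ≥ N, ∀ m ≥ N, |x n - x m| ≤ ε • e

/-- Relative uniform convergence of a net with regulator `e`. -/
def RUTendstoNet {ι : Type*} [Preorder ι] (x : ι → X) (l e : X) : Prop :=
  0 ≤ e ∧ ∀ ε : ℝ, 0 < ε → ∃ α₀, ∀ α ≥ α₀, |x α - l| ≤ ε • e

/-- Relative uniform Cauchy net with regulator `e`. -/
def RUCauchyNet {ι : Type*} [Preorder ι] (x : ι → X) (e : X) : Prop :=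
  0 ≤ e ∧ ∀ ε : ℝ, 0 < ε → ∃ α₀, ∀ α ≥ α₀, ∀ β ≥ α₀, |x α - x β| ≤ ε • e

/-- Uniform adherence of a set: all relative uniform limits of sequences from `A`. -/
def uAdh (A : Set X) : Set X :=
  {l | ∃ x : ℕ → X, (∀ n, x n ∈ A) ∧ ∃ e, RUTendsto x l e}

/-- `A` is uniformly closed. -/
def RUClosed (A : Set X) : Prop := uAdh A ⊆ A

/-- Uniform closure: the least uniformly closed superset of `A`. -/
def uClosure (A : Set X) : Set X := ⋂₀ {B : Set X | A ⊆ B ∧ RUClosed B}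

variable (X)

/-- Relative uniform completeness (for sequences). -/
def RUComplete : Prop :=
  ∀ x : ℕ → X, (∃ e, RUCauchy x e) → ∃ l e, RUTendsto x l e

variable {X}

/-- Relative uniform completeness of a sublattice `Y` (regulators taken in `Y`). -/
def RUCompleteIn (Y : Set X) : Prop :=
  ∀ x : ℕ → X, (∀ n, x n ∈ Y) → (∃ e ∈ Y, RUCauchy x e) →
    ∃ l ∈ Y, ∃ e ∈ Y, RUTendsto x l e

/-- An (order) ideal of a vector lattice: a solid linear subspace. -/
def IsVLIdeal (I : Set X) : Prop :=
  (0 : X) ∈ I ∧ (∀ a ∈ I, ∀ b ∈ I, a + b ∈ I) ∧ (∀ (c : ℝ), ∀ a ∈ I, c • a ∈ I) ∧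
    ∀ x : X, ∀ y ∈ I, |x| ≤ |y| → x ∈ I

/-- The ideal generated by a set. -/
def idealGen (Y : Set X) : Set X := ⋂₀ {I : Set X | Y ⊆ I ∧ IsVLIdeal I}

/-- `B` is a projection band: an ideal along which the space decomposes. -/
def IsProjectionBand (B : Set X) : Prop :=
  IsVLIdeal B ∧ ∀ x : X, ∃ b ∈ B, ∃ d : X, (∀ y ∈ B, |d| ⊓ |y| = 0) ∧ x = b + d

end Defs
/-!
The candidate regulator is the Cauchy regulator `v ∈ Y`. For `n ≥ N` the sequence
`m ↦ |x n - x m|` is bounded by `ε • v` for `m ≥ N` and converges relatively uniformly in `X`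
to `|x n|`; since the Archimedean property makes order intervals closed under relative uniform
limits, `|x n| ≤ ε • v`.
-/

section

variable {X : Type*} [Lattice X] [AddCommGroup X] [Module ℝ X]

lemma VLArchimedean.nonpos_of_forall_le_inv_smul [PosSMulMono ℝ X] (harch : VLArchimedean X)
    {z e : X} (he : 0 ≤ e) (h : ∀ k : ℕ, 0 < k → z ≤ (k : ℝ)⁻¹ • e) : z ≤ 0 := by
  refine harch z e fun k => ?_
  rcases Nat.eq_zero_or_pos k with rfl | hk
  · simpa using he
  · have hk' : (0 : ℝ) < k := Nat.cast_pos.mpr hk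
    calc k • z = (k : ℝ) • z := (Nat.cast_smul_eq_nsmul ℝ k z).symm
      _ ≤ (k : ℝ) • ((k : ℝ)⁻¹ • e) := smul_le_smul_of_nonneg_left (h k hk) hk'.le
      _ = e := by rw [smul_smul, mul_inv_cancel₀ hk'.ne', one_smul]

lemma RUTendsto.le_of_forall_ge_le [CovariantClass X X (· + ·) (· ≤ ·)] [PosSMulMono ℝ X]
    (harch : VLArchimedean X) {x : ℕ → X} {l e a : X}
    (hx : RUTendsto x l e) {N : ℕ} (hle : ∀ m ≥ N, x m ≤ a) : l ≤ a := by
  refine sub_nonpos.mp (harch.nonpos_of_forall_le_inv_smul hx.1 fun k hk => ?_)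
  obtain ⟨M, hM⟩ := hx.2 (k : ℝ)⁻¹ (by positivity)
  calc l - a ≤ l - x (max N M) := sub_le_sub_left (hle _ (le_max_left N M)) l
    _ ≤ |x (max N M) - l| := by rw [abs_sub_comm]; exact le_abs_self _
    _ ≤ (k : ℝ)⁻¹ • e := hM _ (le_max_right N M)

lemma RUTendsto.abs_const_sub [CovariantClass X X (· + ·) (· ≤ ·)] {x : ℕ → X} {l e : X}
    (hx : RUTendsto x l e) (c : X) :
    RUTendsto (fun m => |c - x m|) |c - l| e := by
  refine ⟨hx.1, fun ε hε => ?_⟩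
  obtain ⟨N, hN⟩ := hx.2 ε hε
  refine ⟨N, fun n hn => ?_⟩
  calc |(|c - x n| - |c - l|)| ≤ |(c - x n) - (c - l)| := abs_abs_sub_abs_le _ _
    _ = |x n - l| := by rw [sub_sub_sub_cancel_left, abs_sub_comm]
    _ ≤ ε • e := hN n hn

end

theorem ru_null_and_ru_cauchy_in_sublattice_implies_ru_null_in_sublattice_general
    {X : Type*} [Lattice X] [AddCommGroup X] [Module ℝ X]
    [CovariantClass X X (· + ·) (· ≤ ·)] [PosSMulMono ℝ X]
    (harch : VLArchimedean X)
    {Y : Set X}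
    (x : ℕ → X)
    (hconv : ∃ e, RUTendsto x 0 e)
    (hC : ∃ v ∈ Y, RUCauchy x v) :
    ∃ e ∈ Y, RUTendsto x 0 e := by
  obtain ⟨e, hx⟩ := hconv
  obtain ⟨v, hvY, hv, hCauchy⟩ := hC
  refine ⟨v, hvY, hv, fun ε hε => ?_⟩
  obtain ⟨N, hN⟩ := hCauchy ε hε
  refine ⟨N, fun n hn => ?_⟩
  simpa using (hx.abs_const_sub (x n)).le_of_forall_ge_le harch (hN n hn)

theorem ru_null_and_ru_cauchy_in_sublattice_implies_ru_null_in_sublattice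
    {X : Type*} [Lattice X] [AddCommGroup X] [Module ℝ X]
    [CovariantClass X X (· + ·) (· ≤ ·)] [PosSMulMono ℝ X]
    (harch : VLArchimedean X)
    {Y : Set X} (hY : IsVLSublattice Y)
    (x : ℕ → X) (hx : ∀ n, x n ∈ Y)
    (hconv : ∃ e, RUTendsto x 0 e)
    (hC : ∃ v ∈ Y, RUCauchy x v) :
    ∃ e ∈ Y, RUTendsto x 0 e :=
  ru_null_and_ru_cauchy_in_sublattice_implies_ru_null_in_sublattice_general harch x hconv hC
end

section
/- Let Y be a sublattice of a relatively uniformly complete Archimedean vector lattice X. If Y is uniformly closed in X, then Y is relatively uniformly complete. Conversely, if Y is majorizing in X and relatively uniformly complete, then Y is uniformly closed in X. -/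
open Filter Set

/-! By the Archimedean property, relatively uniform limits are unique, and a relatively uniform
Cauchy sequence that converges at all converges with its own Cauchy regulator. So if `Y` is
uniformly closed, the limit in `X` of a Cauchy sequence of `Y` lies in `Y` and is attained with
the regulator from `Y`. Conversely, if `xₙ → l` in `X` with regulator `e`, a majorant of `e` in `Y`
makes `(xₙ)` Cauchy in `Y`; its limit in `Y` must then be `l`. -/

section RelativelyUniform

variable {X : Type*} [Lattice X] [AddCommGroup X]

lemma abs_sub_le_abs_sub_add_abs_sub [AddLeftMono X] (a b c : X) :
    |a - c| ≤ |a - b| + |b - c| := by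
  simpa only [sub_add_sub_cancel] using abs_add_le (a - b) (b - c)

variable [Module ℝ X]

lemma VLArchimedean.le_zero_of_forall_le_smul [PosSMulMono ℝ X] (harch : VLArchimedean X)
    {a b : X} (hb : 0 ≤ b) (h : ∀ δ : ℝ, 0 < δ → a ≤ δ • b) : a ≤ 0 := by
  refine harch a b fun n => ?_
  rcases n.eq_zero_or_pos with rfl | hn
  · simpa using hb
  · have hn' : (0 : ℝ) < n := Nat.cast_pos.mpr hn
    calc n • a = (n : ℝ) • a := (Nat.cast_smul_eq_nsmul ℝ n a).symm
      _ ≤ (n : ℝ) • ((n : ℝ)⁻¹ • b) :=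
          smul_le_smul_of_nonneg_left (h _ (inv_pos.mpr hn')) hn'.le
      _ = b := smul_inv_smul₀ hn'.ne' b

variable {x : ℕ → X} {l l' e e' : X}

lemma RUTendsto.mono_regulator [PosSMulMono ℝ X] (h : RUTendsto x l e) (hee' : e ≤ e') :
    RUTendsto x l e' :=
  ⟨h.1.trans hee', fun ε hε => (h.2 ε hε).imp fun _ hN n hn =>
    (hN n hn).trans (smul_le_smul_of_nonneg_left hee' hε.le)⟩

lemma RUTendsto.ruCauchy [AddLeftMono X] (h : RUTendsto x l e) : RUCauchy x e := by
  refine ⟨h.1, fun ε hε => ?_⟩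
  obtain ⟨N, hN⟩ := h.2 (ε / 2) (half_pos hε)
  refine ⟨N, fun n hn m hm => ?_⟩
  calc |x n - x m| ≤ |x n - l| + |l - x m| := abs_sub_le_abs_sub_add_abs_sub _ _ _
    _ ≤ (ε / 2) • e + (ε / 2) • e := add_le_add (hN n hn) (abs_sub_comm (x m) l ▸ hN m hm)
    _ = ε • e := by rw [← add_smul, add_halves]

variable [AddLeftMono X] [PosSMulMono ℝ X]

lemma RUTendsto.unique (harch : VLArchimedean X) (h : RUTendsto x l e)
    (h' : RUTendsto x l' e') : l = l' := by
  have habs : |l - l'| ≤ 0 := harch.le_zero_of_forall_le_smul (add_nonneg h.1 h'.1) fun δ hδ => by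
    obtain ⟨N, hN⟩ := h.2 δ hδ
    obtain ⟨N', hN'⟩ := h'.2 δ hδ
    calc |l - l'| ≤ |l - x (max N N')| + |x (max N N') - l'| :=
          abs_sub_le_abs_sub_add_abs_sub _ _ _
      _ ≤ δ • e + δ • e' := add_le_add (abs_sub_comm (x _) l ▸ hN _ (le_max_left _ _))
          (hN' _ (le_max_right _ _))
      _ = δ • (e + e') := (smul_add _ _ _).symm
  exact sub_eq_zero.mp <| le_antisymm ((le_abs_self _).trans habs)
    (neg_nonpos.mp ((neg_le_abs _).trans habs))

lemma RUCauchy.ruTendsto_of_ruTendsto (harch : VLArchimedean X) (hx : RUCauchy x e)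
    (h : RUTendsto x l e') : RUTendsto x l e := by
  refine ⟨hx.1, fun ε hε => ?_⟩
  obtain ⟨N, hN⟩ := hx.2 ε hε
  refine ⟨N, fun n hn => sub_nonpos.mp <| harch.le_zero_of_forall_le_smul h.1 fun δ hδ => ?_⟩
  obtain ⟨M, hM⟩ := h.2 δ hδ
  rw [sub_le_iff_le_add']
  calc |x n - l| ≤ |x n - x (max N M)| + |x (max N M) - l| :=
        abs_sub_le_abs_sub_add_abs_sub _ _ _
    _ ≤ ε • e + δ • e' := add_le_add (hN n hn _ (le_max_left _ _)) (hM _ (le_max_right _ _))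

end RelativelyUniform

theorem uniformly_closed_iff_ru_complete_for_sublattices_general
    {X : Type*} [Lattice X] [AddCommGroup X] [Module ℝ X]
    [CovariantClass X X (· + ·) (· ≤ ·)] [PosSMulMono ℝ X]
    (harch : VLArchimedean X) (hcomp : RUComplete X)
    {Y : Set X} :
    (RUClosed Y → RUCompleteIn Y) ∧
      (Majorizing Y → RUCompleteIn Y → RUClosed Y) := by
  constructor
  · rintro hclosed x hxY ⟨e, heY, hx⟩
    obtain ⟨l, _, hl⟩ := hcomp x ⟨e, hx⟩
    have hle : RUTendsto x l e := hx.ruTendsto_of_ruTendsto harch hl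
    exact ⟨l, hclosed ⟨x, hxY, e, hle⟩, e, heY, hle⟩
  · rintro hmaj hcompY l ⟨x, hxY, e, hl⟩
    obtain ⟨e', he'Y, hee'⟩ := hmaj e hl.1
    obtain ⟨l', hl'Y, _, _, hl'⟩ := hcompY x hxY ⟨e', he'Y, (hl.mono_regulator hee').ruCauchy⟩
    rwa [hl.unique harch hl']

theorem uniformly_closed_iff_ru_complete_for_sublattices
    {X : Type*} [Lattice X] [AddCommGroup X] [Module ℝ X]
    [CovariantClass X X (· + ·) (· ≤ ·)] [PosSMulMono ℝ X]
    (harch : VLArchimedean X) (hcomp : RUComplete X)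
    {Y : Set X} (hY : IsVLSublattice Y) :
    (RUClosed Y → RUCompleteIn Y) ∧
      (Majorizing Y → RUCompleteIn Y → RUClosed Y) :=
  uniformly_closed_iff_ru_complete_for_sublattices_general harch hcomp
end
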